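/- There exists ε₀ > 0 such that for every ε ∈ (0, ε₀) the following holds. Define the sequence (xₙ) by x₁ = 1 and x_{n+1} = 2 + ε − 1/xₙ for n ≥ 1. Then for every natural number n with 1 ≤ n ≤ 1/(2√ε), one has |xₙ − (1 + (n−1)ε)| ≤ 10·n²·ε·√ε. -/

import Mathlib

/-!
With `aₙ = 1 + (n - 1)ε` one has exactly
`x_{n+1} - a_{n+1} = (xₙ - aₙ) / (aₙ xₙ) - (n - 1)² ε² / aₙ`,
so the error is multiplied by at most `1 + 7nε` (as long as `xₙ` stays close to `1`) and then
grows by at most `n² ε²`. For `n √ε ≤ 1/2` these two effects keep it below `10 n² ε √ε`.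
-/

lemma one_sub_sub_one_div_eq {t x : ℝ} (ht : 1 + t ≠ 0) (hx : x ≠ 0) :
    1 - t - 1 / x = (x - (1 + t)) / ((1 + t) * x) - t ^ 2 / (1 + t) := by
  field_simp
  ring

lemma abs_one_sub_sub_one_div_le {t c x : ℝ} (ht : 0 ≤ t) (hc : 0 ≤ c) (hc' : c ≤ 1 / 20)
    (hx : 1 - 5 * c ≤ x) :
    |1 - t - 1 / x| ≤ |x - (1 + t)| * (1 + 7 * c) + t ^ 2 := by
  have hx0 : 0 < x := by linarith
  have ha : 1 ≤ 1 + t := by linarith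
  have hax : 0 < (1 + t) * x := by positivity
  have hinv : 1 ≤ (1 + 7 * c) * ((1 + t) * x) :=
    calc 1 ≤ (1 + 7 * c) * (1 - 5 * c) := by nlinarith
      _ ≤ (1 + 7 * c) * ((1 + t) * x) := by gcongr; nlinarith
  rw [one_sub_sub_one_div_eq (by positivity) hx0.ne']
  calc |(x - (1 + t)) / ((1 + t) * x) - t ^ 2 / (1 + t)|
      ≤ |x - (1 + t)| / ((1 + t) * x) + t ^ 2 / (1 + t) := by
        refine (abs_sub _ _).trans_eq ?_
        rw [abs_div, abs_of_pos hax, abs_of_nonneg (by positivity : 0 ≤ t ^ 2 / (1 + t))]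
    _ ≤ |x - (1 + t)| * (1 + 7 * c) + t ^ 2 := by
        gcongr
        · rw [div_le_iff₀ hax, mul_assoc]
          exact le_mul_of_one_le_right (abs_nonneg _) hinv
        · exact div_le_self (sq_nonneg t) ha

lemma error_bound_succ {n s E : ℝ} (hn : 1 ≤ n) (hs : 0 ≤ s) (hns : n * s ≤ 1 / 2)
    (hE : E ≤ 10 * n ^ 2 * s ^ 3) :
    E * (1 + 7 * (n * s ^ 2)) + ((n - 1) * s ^ 2) ^ 2 ≤ 10 * (n + 1) ^ 2 * s ^ 3 := by
  have hns0 : 0 ≤ n * s := by positivity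
  have hn2s2 : (n * s) ^ 2 ≤ 1 / 4 := by nlinarith
  have hs3 : 0 ≤ n * s ^ 3 := by positivity
  have hsq : ((n - 1) * s ^ 2) ^ 2 ≤ (n * s) * (n * s ^ 3) := by
    have : (n - 1) ^ 2 ≤ n ^ 2 := by nlinarith
    calc ((n - 1) * s ^ 2) ^ 2 = (n - 1) ^ 2 * s ^ 4 := by ring
      _ ≤ n ^ 2 * s ^ 4 := by gcongr
      _ = (n * s) * (n * s ^ 3) := by ring
  have hgrow : E * (7 * (n * s ^ 2)) ≤ 70 * (n * s) ^ 2 * (n * s ^ 3) := by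
    have := mul_le_mul_of_nonneg_right hE (by positivity : (0 : ℝ) ≤ 7 * (n * s ^ 2))
    nlinarith
  nlinarith [mul_le_mul_of_nonneg_right hn2s2 hs3, mul_le_mul_of_nonneg_right hns hs3]

theorem abs_sub_linear_le_of_rec {s : ℝ} (hs : 0 < s) (hs' : s ≤ 1 / 10) {X : ℕ → ℝ}
    (hX1 : X 1 = 1) (hrec : ∀ n : ℕ, 1 ≤ n → X (n + 1) = 2 + s ^ 2 - 1 / X n)
    (n : ℕ) (hn : 1 ≤ n) (hns : n * s ≤ 1 / 2) :
    |X n - (1 + ((n : ℝ) - 1) * s ^ 2)| ≤ 10 * (n : ℝ) ^ 2 * s ^ 3 := by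
  induction n, hn using Nat.le_induction with
  | base =>
    simp only [hX1, Nat.cast_one, sub_self, zero_mul, add_zero, abs_zero]
    positivity
  | succ n hn ih =>
    push_cast at hns ⊢
    have hn1 : (1 : ℝ) ≤ n := by exact_mod_cast hn
    have hns' : (n : ℝ) * s ≤ 1 / 2 := by linarith
    have hprev := ih hns'
    have hc : (n : ℝ) * s ^ 2 ≤ 1 / 20 := by nlinarith
    have hX : 1 - 5 * ((n : ℝ) * s ^ 2) ≤ X n := by
      have := (abs_le.mp hprev).1
      nlinarith [mul_le_mul_of_nonneg_right hns' (by positivity : (0 : ℝ) ≤ n * s ^ 2)]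
    have hstep := abs_one_sub_sub_one_div_le (t := ((n : ℝ) - 1) * s ^ 2)
      (by nlinarith) (by positivity) hc hX
    rw [hrec n hn, show 2 + s ^ 2 - 1 / X n - (1 + ((n : ℝ) + 1 - 1) * s ^ 2)
      = 1 - ((n : ℝ) - 1) * s ^ 2 - 1 / X n by ring]
    exact hstep.trans (error_bound_succ hn1 hs.le hns' hprev)

theorem sequence_asymptotics :
    ∃ ε₀ : ℝ, 0 < ε₀ ∧ ∀ ε : ℝ, 0 < ε → ε < ε₀ →
      ∀ X : ℕ → ℝ, X 1 = 1 → (∀ n : ℕ, 1 ≤ n → X (n + 1) = 2 + ε - 1 / X n) →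
        ∀ n : ℕ, 1 ≤ n → (n : ℝ) ≤ 1 / (2 * Real.sqrt ε) →
          |X n - (1 + ((n : ℝ) - 1) * ε)| ≤ 10 * (n : ℝ) ^ 2 * ε * Real.sqrt ε := by
  refine ⟨1 / 100, by norm_num, fun ε hε hε₀ X hX1 hrec n hn hnε => ?_⟩
  set s := Real.sqrt ε
  have hs : 0 < s := Real.sqrt_pos.mpr hε
  have hε_eq : ε = s ^ 2 := (Real.sq_sqrt hε.le).symm
  have hs' : s ≤ 1 / 10 := by nlinarith
  have hns : (n : ℝ) * s ≤ 1 / 2 := by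
    rw [le_div_iff₀ (by positivity)] at hnε
    linarith
  rw [hε_eq] at hrec ⊢
  rw [show 10 * (n : ℝ) ^ 2 * s ^ 2 * s = 10 * (n : ℝ) ^ 2 * s ^ 3 by ring]
  exact abs_sub_linear_le_of_rec hs hs' hX1 hrec n hn hns
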